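/- Let F : R^d -> R be L-smooth, mu > 0, and define g(w, z) = d * (F(w + mu*z) - F(w - mu*z))/(2*mu) * z. For z1, z2 independently and uniformly sampled from the unit sphere S^d, E[ <g(w, z1), g(w, z2)> ] <= (1 + sqrt(d)) * ||grad F(w)||_2^2 + 2 * L^2 * mu^2 * d^2. -/

import Mathlib

open MeasureTheory

abbrev Euc (d : ℕ) := EuclideanSpace ℝ (Fin d)

/-- The uniform (rotation-invariant) probability measure on the unit sphere in `ℝ^d`. -/
noncomputable def uniformSphere (d : ℕ) :
    Measure (Metric.sphere (0 : Euc d) 1) :=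
  ((volume : Measure (Euc d)).toSphere Set.univ)⁻¹ • (volume : Measure (Euc d)).toSphere

instance uniformSphere_finite (d : ℕ) : IsFiniteMeasure (uniformSphere d) := by
  constructor
  rw [uniformSphere, Measure.smul_apply, smul_eq_mul]
  exact lt_of_le_of_lt (ENNReal.inv_mul_le_one _) ENNReal.one_lt_top

open Metric Set
open scoped Pointwise

/-!
By independence the double expectation is `‖E g(w, z)‖²`. The descent lemma for the `L`-smooth
`F`, applied at `w ± μz`, gives `g(w, z) = d⟨∇F(w), z⟩ z + e(z)` with `‖e(z)‖ ≤ dLμ/2`, and the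
second-moment identity `E[z zᵀ] = I/d` of the uniform measure on the sphere (a consequence of its
invariance under coordinate sign changes and permutations) gives `E[d⟨∇F(w), z⟩ z] = ∇F(w)`.
Hence `‖E g‖ ≤ ‖∇F(w)‖ + dLμ/2`, and `(a + b)² ≤ 2a² + 2b²` with `2 ≤ 1 + √d` finishes.
-/

lemma integral_integral_inner_eq_norm_integral_sq {α E : Type*} [MeasurableSpace α]
    {μ : Measure α} [NormedAddCommGroup E] [InnerProductSpace ℝ E] [CompleteSpace E]
    {f : α → E} (hf : Integrable f μ) :
    ∫ a, ∫ b, inner ℝ (f a) (f b) ∂μ ∂μ = ‖∫ a, f a ∂μ‖ ^ 2 := by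
  have hinner (a : α) : ∫ b, inner ℝ (f a) (f b) ∂μ = inner ℝ (∫ b, f b ∂μ) (f a) := by
    rw [integral_inner hf, real_inner_comm]
  simp_rw [hinner]
  rw [integral_inner hf, real_inner_self_eq_norm_sq]

section Smooth

variable {E : Type*} [NormedAddCommGroup E] [InnerProductSpace ℝ E] [CompleteSpace E]
  {F : E → ℝ} {L : ℝ}

lemma abs_sub_sub_inner_gradient_le (hF : Differentiable ℝ F)
    (hsmooth : ∀ x y, ‖gradient F x - gradient F y‖ ≤ L * ‖x - y‖) (w u : E) :
    |F (w + u) - F w - inner ℝ (gradient F w) u| ≤ L / 2 * ‖u‖ ^ 2 := by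
  -- `φ(t) = F(w + t u) - F w - t⟨∇F w, u⟩` is fenced by `B(t) = L t² ‖u‖² / 2` since `|φ'| ≤ B'`.
  have hderiv : ∀ t : ℝ,
      HasDerivAt (fun t : ℝ => F (w + t • u) - F w - t * inner ℝ (gradient F w) u)
        (inner ℝ (gradient F (w + t • u) - gradient F w) u) t := by
    intro t
    have hline : HasDerivAt (fun t : ℝ => w + t • u) u t := by
      simpa using ((hasDerivAt_id t).smul_const u).const_add w
    have := ((hF (w + t • u)).hasGradientAt.hasFDerivAt.comp_hasDerivAt t hline).sub_const (F w)
    refine (this.sub ((hasDerivAt_id t).mul_const (inner ℝ (gradient F w) u))).congr_deriv ?_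
    rw [InnerProductSpace.toDual_apply_apply, inner_sub_left, one_mul]
  have hbound : ∀ t ∈ Ico (0 : ℝ) 1,
      ‖inner ℝ (gradient F (w + t • u) - gradient F w) u‖ ≤ L * t * ‖u‖ ^ 2 := by
    rintro t ⟨ht, -⟩
    calc ‖inner ℝ (gradient F (w + t • u) - gradient F w) u‖
        ≤ ‖gradient F (w + t • u) - gradient F w‖ * ‖u‖ := norm_inner_le_norm _ _
      _ ≤ L * ‖t • u‖ * ‖u‖ := by
          gcongr
          simpa using hsmooth (w + t • u) w
      _ = L * t * ‖u‖ ^ 2 := by rw [norm_smul, Real.norm_of_nonneg ht]; ring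
  have hB (t : ℝ) : HasDerivAt (fun t => L / 2 * t ^ 2 * ‖u‖ ^ 2) (L * t * ‖u‖ ^ 2) t :=
    (((hasDerivAt_pow 2 t).const_mul (L / 2)).mul_const (‖u‖ ^ 2)).congr_deriv (by ring)
  have := image_norm_le_of_norm_deriv_right_le_deriv_boundary (a := 0) (b := 1)
    (fun t _ => (hderiv t).continuousAt.continuousWithinAt)
    (fun t _ => (hderiv t).hasDerivWithinAt) (by simp) hB hbound (right_mem_Icc.2 zero_le_one)
  simpa using this

lemma abs_sub_sub_two_inner_gradient_le (hF : Differentiable ℝ F)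
    (hsmooth : ∀ x y, ‖gradient F x - gradient F y‖ ≤ L * ‖x - y‖) (w u : E) :
    |F (w + u) - F (w - u) - 2 * inner ℝ (gradient F w) u| ≤ L * ‖u‖ ^ 2 := by
  have hplus := abs_sub_sub_inner_gradient_le hF hsmooth w u
  have hminus := abs_sub_sub_inner_gradient_le hF hsmooth w (-u)
  rw [← sub_eq_add_neg, inner_neg_right, norm_neg] at hminus
  calc |F (w + u) - F (w - u) - 2 * inner ℝ (gradient F w) u|
      = |(F (w + u) - F w - inner ℝ (gradient F w) u)
          - (F (w - u) - F w - -inner ℝ (gradient F w) u)| := by ring_nf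
    _ ≤ L / 2 * ‖u‖ ^ 2 + L / 2 * ‖u‖ ^ 2 := (abs_sub _ _).trans (add_le_add hplus hminus)
    _ = L * ‖u‖ ^ 2 := by ring

lemma abs_centralDifference_sub_inner_gradient_le (hF : Differentiable ℝ F)
    (hsmooth : ∀ x y, ‖gradient F x - gradient F y‖ ≤ L * ‖x - y‖) (w : E) {μ : ℝ}
    (hμ : 0 < μ) {z : E} (hz : ‖z‖ = 1) :
    |(F (w + μ • z) - F (w - μ • z)) / (2 * μ) - inner ℝ (gradient F w) z| ≤ L * μ / 2 := by
  have h := abs_sub_sub_two_inner_gradient_le hF hsmooth w (μ • z)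
  rw [real_inner_smul_right, ← mul_assoc, norm_smul, Real.norm_of_nonneg hμ.le, hz,
    mul_one] at h
  have h2μ : 0 < 2 * μ := by positivity
  rw [div_sub' h2μ.ne', abs_div, abs_of_pos h2μ, div_le_iff₀ h2μ]
  linarith

end Smooth

section UnitSphere

variable {E : Type*} [NormedAddCommGroup E] [InnerProductSpace ℝ E]

def LinearIsometryEquiv.unitSphereHomeomorph (e : E ≃ₗᵢ[ℝ] E) :
    sphere (0 : E) 1 ≃ₜ sphere (0 : E) 1 :=
  e.toHomeomorph.subtype fun x => by simp

@[simp] lemma LinearIsometryEquiv.coe_unitSphereHomeomorph (e : E ≃ₗᵢ[ℝ] E)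
    (z : sphere (0 : E) 1) : (e.unitSphereHomeomorph z : E) = e z := rfl

variable [FiniteDimensional ℝ E] [MeasurableSpace E] [BorelSpace E]

lemma LinearIsometryEquiv.measurePreserving_toSphere (e : E ≃ₗᵢ[ℝ] E) :
    MeasurePreserving e.unitSphereHomeomorph (volume : Measure E).toSphere
      (volume : Measure E).toSphere := by
  refine ⟨e.unitSphereHomeomorph.continuous.measurable, Measure.ext fun s hs => ?_⟩
  have hs' := e.unitSphereHomeomorph.symm.measurableEmbedding.measurableSet_image.2 hs
  rw [e.unitSphereHomeomorph.measurableEmbedding.map_apply, ← Homeomorph.image_symm,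
    Measure.toSphere_apply' _ hs', Measure.toSphere_apply' _ hs]
  have himage : ((↑) '' (e.unitSphereHomeomorph.symm '' s) : Set E) = e.symm '' ((↑) '' s) := by
    rw [image_image, image_image]; rfl
  rw [himage, ← image2_smul, ← image2_smul, image2_image_right]
  simp_rw [← e.symm.map_smul]
  rw [← image_image2, e.symm.image_eq_preimage_symm, e.symm_symm,
    e.measurePreserving.measure_preimage_emb e.toHomeomorph.measurableEmbedding]

end UnitSphere

section UniformSphere

variable {d : ℕ}

lemma isProbabilityMeasure_uniformSphere (hd : 0 < d) :
    IsProbabilityMeasure (uniformSphere d) := by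
  have : Nonempty (Fin d) := ⟨⟨0, hd⟩⟩
  have : NeZero (volume : Measure (Euc d)).toSphere := ⟨Measure.toSphere_ne_zero _⟩
  exact isProbabilityMeasureSMul

lemma integral_comp_linearIsometryEquiv_uniformSphere (e : Euc d ≃ₗᵢ[ℝ] Euc d)
    (g : sphere (0 : Euc d) 1 → ℝ) :
    ∫ z, g (e.unitSphereHomeomorph z) ∂uniformSphere d = ∫ z, g z ∂uniformSphere d := by
  have : MeasurePreserving e.unitSphereHomeomorph (uniformSphere d) (uniformSphere d) := by
    refine ⟨e.unitSphereHomeomorph.continuous.measurable, ?_⟩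
    rw [uniformSphere, Measure.map_smul, e.measurePreserving_toSphere.map_eq]
  exact this.integral_comp e.unitSphereHomeomorph.measurableEmbedding g

lemma Continuous.integrable_uniformSphere {V : Type*} [NormedAddCommGroup V]
    {f : sphere (0 : Euc d) 1 → V} (hf : Continuous f) : Integrable f (uniformSphere d) :=
  hf.integrable_of_hasCompactSupport (HasCompactSupport.of_compactSpace f)

lemma integral_coord_mul_coord_uniformSphere {i j : Fin d} (hij : i ≠ j) :
    ∫ z : sphere (0 : Euc d) 1, (z : Euc d) i * (z : Euc d) j ∂uniformSphere d = 0 := by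
  let flip : Euc d ≃ₗᵢ[ℝ] Euc d := LinearIsometryEquiv.piLpCongrRight 2
    fun k => if k = j then LinearIsometryEquiv.neg ℝ else LinearIsometryEquiv.refl ℝ ℝ
  have hflip (z : Euc d) : flip z i * flip z j = -(z i * z j) := by simp [flip, hij]
  have h := integral_comp_linearIsometryEquiv_uniformSphere flip
    fun z => (z : Euc d) i * (z : Euc d) j
  simp only [LinearIsometryEquiv.coe_unitSphereHomeomorph, hflip, integral_neg] at h
  linarith

lemma integral_coord_sq_uniformSphere (hd : 0 < d) (i : Fin d) :
    ∫ z : sphere (0 : Euc d) 1, (z : Euc d) i ^ 2 ∂uniformSphere d = (d : ℝ)⁻¹ := by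
  have : IsProbabilityMeasure (uniformSphere d) := isProbabilityMeasure_uniformSphere hd
  have hswap (j : Fin d) :
      ∫ z : sphere (0 : Euc d) 1, (z : Euc d) j ^ 2 ∂uniformSphere d
        = ∫ z : sphere (0 : Euc d) 1, (z : Euc d) i ^ 2 ∂uniformSphere d := by
    have h := integral_comp_linearIsometryEquiv_uniformSphere
      (LinearIsometryEquiv.piLpCongrLeft 2 ℝ ℝ (Equiv.swap i j)) fun z => (z : Euc d) i ^ 2
    simpa using h
  have hsum :
      ∑ j : Fin d, ∫ z : sphere (0 : Euc d) 1, (z : Euc d) j ^ 2 ∂uniformSphere d = 1 := by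
    rw [← integral_finsetSum _ fun j _ => (by fun_prop : Continuous _).integrable_uniformSphere]
    simp [← EuclideanSpace.real_norm_sq_eq]
  simp only [hswap, Finset.sum_const, Finset.card_univ, Fintype.card_fin, nsmul_eq_mul] at hsum
  exact eq_inv_of_mul_eq_one_right hsum

lemma integral_inner_smul_uniformSphere (hd : 0 < d) (x : Euc d) :
    ∫ z : sphere (0 : Euc d) 1, inner ℝ x (z : Euc d) • (z : Euc d) ∂uniformSphere d
      = (d : ℝ)⁻¹ • x := by
  ext i
  have hint : Integrable (fun z : sphere (0 : Euc d) 1 => inner ℝ x (z : Euc d) • (z : Euc d))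
      (uniformSphere d) := (by fun_prop : Continuous _).integrable_uniformSphere
  refine ((EuclideanSpace.proj i).integral_comp_comm hint).symm.trans ?_
  have hexpand (z : sphere (0 : Euc d) 1) :
      EuclideanSpace.proj i (inner ℝ x (z : Euc d) • (z : Euc d))
        = ∑ j, x j * ((z : Euc d) i * (z : Euc d) j) := by
    simp only [PiLp.inner_apply, RCLike.inner_apply, Real.ringHom_apply, map_smul,
      PiLp.proj_apply, smul_eq_mul]
    rw [Finset.sum_mul]
    exact Finset.sum_congr rfl fun j _ => by ring
  simp_rw [hexpand]
  rw [integral_finsetSum _ fun j _ => (by fun_prop : Continuous _).integrable_uniformSphere,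
    Finset.sum_eq_single i]
  · simp [integral_const_mul, ← sq, integral_coord_sq_uniformSphere hd, mul_comm]
  · intro j _ hji
    rw [integral_const_mul, integral_coord_mul_coord_uniformSphere hji.symm, mul_zero]
  · simp

lemma norm_integral_smul_sub_le_uniformSphere (hd : 0 < d) {a : sphere (0 : Euc d) 1 → ℝ}
    (ha : Continuous a) {x : Euc d} {C : ℝ}
    (hC : ∀ z : sphere (0 : Euc d) 1, |a z - d * inner ℝ x (z : Euc d)| ≤ C) :
    ‖∫ z, a z • (z : Euc d) ∂uniformSphere d - x‖ ≤ C := by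
  have : IsProbabilityMeasure (uniformSphere d) := isProbabilityMeasure_uniformSphere hd
  have hx : ∫ z : sphere (0 : Euc d) 1, ((d : ℝ) * inner ℝ x (z : Euc d)) • (z : Euc d)
      ∂uniformSphere d = x := by
    simp_rw [mul_smul]
    rw [integral_smul, integral_inner_smul_uniformSphere hd, smul_inv_smul₀ (by positivity)]
  rw [← hx, ← integral_sub (by fun_prop : Continuous _).integrable_uniformSphere
    (by fun_prop : Continuous _).integrable_uniformSphere]
  refine (norm_integral_le_of_norm_le_const (C := C) (.of_forall fun z => ?_)).trans_eq
    (by rw [probReal_univ, mul_one])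
  rw [← sub_smul, norm_smul, norm_eq_of_mem_sphere z, mul_one, Real.norm_eq_abs]
  exact hC z

end UniformSphere

theorem stmt13_general (d : ℕ) (hd : 0 < d) (F : Euc d → ℝ) (L μ : ℝ) (hμ : 0 < μ)
    (hF : Differentiable ℝ F)
    (hsmooth : ∀ x y : Euc d, ‖gradient F x - gradient F y‖ ≤ L * ‖x - y‖) (w : Euc d) :
    ∫ z1 : Metric.sphere (0 : Euc d) 1, ∫ z2 : Metric.sphere (0 : Euc d) 1,
        (inner ℝ (((d : ℝ) * (F (w + μ • (z1 : Euc d)) - F (w - μ • (z1 : Euc d))) / (2 * μ)) •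
            (z1 : Euc d))
          (((d : ℝ) * (F (w + μ • (z2 : Euc d)) - F (w - μ • (z2 : Euc d))) / (2 * μ)) •
            (z2 : Euc d)) : ℝ)
        ∂(uniformSphere d) ∂(uniformSphere d)
      ≤ (1 + Real.sqrt d) * ‖gradient F w‖ ^ 2 + 2 * L ^ 2 * μ ^ 2 * (d : ℝ) ^ 2 := by
  set g : sphere (0 : Euc d) 1 → ℝ :=
    fun z => (d : ℝ) * (F (w + μ • (z : Euc d)) - F (w - μ • (z : Euc d))) / (2 * μ)
  have hg : Continuous g := by have := hF.continuous; fun_prop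
  have hmean :
      ‖∫ z, g z • (z : Euc d) ∂uniformSphere d - gradient F w‖ ≤ d * (L * μ / 2) := by
    refine norm_integral_smul_sub_le_uniformSphere hd hg fun z => ?_
    simp only [g]
    rw [mul_div_assoc, ← mul_sub, abs_mul, Nat.abs_cast]
    exact mul_le_mul_of_nonneg_left
      (abs_centralDifference_sub_inner_gradient_le hF hsmooth w hμ (norm_eq_of_mem_sphere z))
      (Nat.cast_nonneg d)
  refine (integral_integral_inner_eq_norm_integral_sq (f := fun z => g z • (z : Euc d))
    (hg.smul continuous_subtype_val).integrable_uniformSphere).trans_le ?_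
  set v := ∫ z, g z • (z : Euc d) ∂uniformSphere d
  have hv : ‖v‖ ≤ ‖gradient F w‖ + d * (L * μ / 2) := by
    have := norm_le_norm_add_norm_sub' v (gradient F w)
    linarith
  have hsqrt : 1 ≤ Real.sqrt d := Real.one_le_sqrt.2 (by exact_mod_cast hd)
  calc ‖v‖ ^ 2 ≤ (‖gradient F w‖ + d * (L * μ / 2)) ^ 2 := by gcongr
    _ ≤ 2 * ‖gradient F w‖ ^ 2 + 2 * (d * (L * μ / 2)) ^ 2 := by
        nlinarith [sq_nonneg (‖gradient F w‖ - d * (L * μ / 2))]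
    _ ≤ (1 + Real.sqrt d) * ‖gradient F w‖ ^ 2 + 2 * L ^ 2 * μ ^ 2 * (d : ℝ) ^ 2 := by
        nlinarith [sq_nonneg ‖gradient F w‖, sq_nonneg (d * L * μ)]

/-- Cross-term bound for the zero-order estimate with `μ > 0` over independent directions:
`E⟨g(w,z1), g(w,z2)⟩ ≤ (1 + √d)‖∇F(w)‖² + 2L²μ²d²`. -/
theorem stmt13 (d : ℕ) (hd : 0 < d) (F : Euc d → ℝ) (L μ : ℝ) (hμ : 0 < μ) (hL : 0 < L)
    (hF : Differentiable ℝ F)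
    (hsmooth : ∀ x y : Euc d, ‖gradient F x - gradient F y‖ ≤ L * ‖x - y‖) (w : Euc d) :
    ∫ z1 : Metric.sphere (0 : Euc d) 1, ∫ z2 : Metric.sphere (0 : Euc d) 1,
        (inner ℝ (((d : ℝ) * (F (w + μ • (z1 : Euc d)) - F (w - μ • (z1 : Euc d))) / (2 * μ)) •
            (z1 : Euc d))
          (((d : ℝ) * (F (w + μ • (z2 : Euc d)) - F (w - μ • (z2 : Euc d))) / (2 * μ)) •
            (z2 : Euc d)) : ℝ)
        ∂(uniformSphere d) ∂(uniformSphere d)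
      ≤ (1 + Real.sqrt d) * ‖gradient F w‖ ^ 2 + 2 * L ^ 2 * μ ^ 2 * (d : ℝ) ^ 2 :=
  stmt13_general d hd F L μ hμ hF hsmooth w
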